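/- Let d ≥ 1, β ∈ (1/2, ∞), Q = (2β−1)d + 1, and let a > 0 and c > 0. Define H : ℝ × ℝ^d × ℝ^d → ℝ by H(s,y,w) = (−s)^{−a} if s < 0, |y| ≤ c(−s)^β and |w| ≤ c(−s)^{β−1}, and H(s,y,w) = 0 otherwise. Then H belongs to the weak Lebesgue space L^{Q/a,∞}(ℝ^{1+2d}), i.e. sup_{λ>0} λ · |{(s,y,w) : H(s,y,w) > λ}|^{a/Q} < ∞; indeed |{H > λ}| = C'·λ^{−Q/a} for all λ > 0, where C' depends only on d, β, c, a. -/

import Mathlib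

open MeasureTheory Real
open scoped ENNReal

noncomputable section

abbrev E (d : ℕ) := EuclideanSpace ℝ (Fin d)
abbrev Z (d : ℕ) := ℝ × E d × E d

/-- The kernel-shaped function `H(s,y,w) = (-s)^{-a}` on the region
`s < 0`, `|y| ≤ c(-s)^β`, `|w| ≤ c(-s)^{β-1}`, and `0` otherwise. -/
def Hfun (d : ℕ) (β a c : ℝ) : Z d → ℝ := fun z =>
  if z.1 < 0 ∧ ‖z.2.1‖ ≤ c * (-z.1) ^ β ∧ ‖z.2.2‖ ≤ c * (-z.1) ^ (β - 1)
  then (-z.1) ^ (-a) else 0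

/-! For `λ > 0` put `T = λ^{-1/a}`, so that `{H > λ}` consists of the points with `-T < s < 0`
whose fibre over `s` is the product of the closed balls of radii `c(-s)^β` and `c(-s)^{β-1}` in
`ℝ^d`. That fibre has measure `(c^d ω_d)² (-s)^{(2β-1)d}`, where `ω_d` is the volume of the unit
ball, and integrating over `s` gives `|{H > λ}| = (c^d ω_d)² T^Q / Q = C' λ^{-Q/a}`. Hence
`λ |{H > λ}|^{a/Q} = C'^{a/Q}` for every `λ > 0`. -/

open Metric Set

theorem volume_setOf_fst_mem_norm_le_norm_le {V W : Type*}
    [NormedAddCommGroup V] [MeasureSpace V] [OpensMeasurableSpace V]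
    [SigmaFinite (volume : Measure V)]
    [NormedAddCommGroup W] [MeasureSpace W] [OpensMeasurableSpace W]
    [SigmaFinite (volume : Measure W)]
    {S : Set ℝ} (hS : MeasurableSet S) {r₁ r₂ : ℝ → ℝ} (hr₁ : Measurable r₁)
    (hr₂ : Measurable r₂) :
    volume {z : ℝ × V × W | z.1 ∈ S ∧ ‖z.2.1‖ ≤ r₁ z.1 ∧ ‖z.2.2‖ ≤ r₂ z.1} =
      ∫⁻ s in S, volume (closedBall (0 : V) (r₁ s)) * volume (closedBall (0 : W) (r₂ s)) := by
  have hmeas : MeasurableSet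
      {z : ℝ × V × W | z.1 ∈ S ∧ ‖z.2.1‖ ≤ r₁ z.1 ∧ ‖z.2.2‖ ≤ r₂ z.1} :=
    (measurable_fst hS).inter <|
      (measurableSet_le (by fun_prop) (hr₁.comp measurable_fst)).inter
        (measurableSet_le (by fun_prop) (hr₂.comp measurable_fst))
  rw [Measure.volume_eq_prod, Measure.prod_apply hmeas, ← lintegral_indicator hS]
  congr 1 with s
  by_cases hs : s ∈ S
  · have : Prod.mk s ⁻¹'
        {z : ℝ × V × W | z.1 ∈ S ∧ ‖z.2.1‖ ≤ r₁ z.1 ∧ ‖z.2.2‖ ≤ r₂ z.1} =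
        closedBall 0 (r₁ s) ×ˢ closedBall 0 (r₂ s) := by
      ext; simp [hs]
    rw [this, indicator_of_mem hs, Measure.volume_eq_prod, Measure.prod_prod]
  · have : Prod.mk s ⁻¹'
        {z : ℝ × V × W | z.1 ∈ S ∧ ‖z.2.1‖ ≤ r₁ z.1 ∧ ‖z.2.2‖ ≤ r₂ z.1} = ∅ := by
      ext; simp [hs]
    rw [this, indicator_of_notMem hs, measure_empty]

theorem lintegral_Ioo_neg_rpow {p : ℝ} (hp : -1 < p) {T : ℝ} (hT : 0 ≤ T) :
    ∫⁻ s in Ioo (-T) 0, ENNReal.ofReal ((-s) ^ p) = ENNReal.ofReal (T ^ (p + 1) / (p + 1)) := by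
  have hint : IntegrableOn (fun s : ℝ => (-s) ^ p) (Ioo (-T) 0) := by
    have h : IntervalIntegrable (fun t : ℝ => t ^ p) volume 0 T :=
      intervalIntegral.intervalIntegrable_rpow' hp
    have := (IntervalIntegrable.iff_comp_neg (by simp)).1 h
    rw [neg_zero] at this
    exact (intervalIntegrable_iff_integrableOn_Ioo_of_le (by linarith)).1 this.symm
  rw [← ofReal_integral_eq_lintegral_ofReal hint]
  · rw [← integral_Ioc_eq_integral_Ioo, ← intervalIntegral.integral_of_le (by linarith),
      intervalIntegral.integral_comp_neg (fun t => t ^ p), neg_zero, neg_neg,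
      integral_rpow (Or.inl hp), zero_rpow (by linarith), sub_zero]
  · filter_upwards [self_mem_ae_restrict measurableSet_Ioo] with s hs
    exact rpow_nonneg (by linarith [hs.2]) p

theorem iSup_ofReal_mul_rpow_inv_of_eq_mul_rpow_neg {m : ℝ → ℝ≥0∞} {C q : ℝ} (hC : 0 < C)
    (hq : q ≠ 0) (hm : ∀ l : ℝ, 0 < l → m l = ENNReal.ofReal (C * l ^ (-q))) :
    ⨆ (l : ℝ) (_ : 0 < l), ENNReal.ofReal l * m l ^ q⁻¹ = ENNReal.ofReal (C ^ q⁻¹) := by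
  have hterm : ∀ l : ℝ, 0 < l → ENNReal.ofReal l * m l ^ q⁻¹ = ENNReal.ofReal (C ^ q⁻¹) := by
    intro l hl
    rw [hm l hl, ENNReal.ofReal_rpow_of_pos (by positivity), ← ENNReal.ofReal_mul hl.le,
      mul_rpow hC.le (by positivity), ← rpow_mul hl.le, neg_mul, mul_inv_cancel₀ hq,
      rpow_neg_one, mul_left_comm, mul_inv_cancel₀ hl.ne', mul_one]
  exact le_antisymm (iSup₂_le fun l hl => (hterm l hl).le)
    (le_iSup₂_of_le 1 one_pos (hterm 1 one_pos).ge)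

theorem setOf_lt_Hfun {d : ℕ} {β a c l : ℝ} (ha : 0 < a) (hl : 0 < l) :
    {z : Z d | l < Hfun d β a c z} =
      {z : Z d | z.1 ∈ Ioo (-l ^ (-a⁻¹)) 0 ∧ ‖z.2.1‖ ≤ c * (-z.1) ^ β ∧
        ‖z.2.2‖ ≤ c * (-z.1) ^ (β - 1)} := by
  have hlt : ∀ t : ℝ, 0 < t → (l < t ^ (-a) ↔ t < l ^ (-a⁻¹)) := fun t ht => by
    rw [← rpow_lt_rpow_iff_of_neg (rpow_pos_of_pos hl _) ht (neg_neg_of_pos ha), ← rpow_mul hl.le,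
      neg_mul_neg, inv_mul_cancel₀ ha.ne', rpow_one]
  ext z
  simp only [Hfun, mem_ofPred_eq, mem_Ioo]
  split_ifs with h
  · have := hlt (-z.1) (by linarith [h.1])
    constructor
    · exact fun hz => ⟨⟨by linarith [this.1 hz], h.1⟩, h.2⟩
    · exact fun hz => this.2 (by linarith [hz.1.1])
  · exact ⟨fun hz => absurd hz (by linarith), fun hz => absurd ⟨hz.1.2, hz.2⟩ h⟩

theorem volume_setOf_lt_Hfun {d : ℕ} {β a c l : ℝ} (hβ : 1/2 < β) (ha : 0 < a) (hc : 0 < c)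
    (hl : 0 < l) :
    volume {z : Z d | l < Hfun d β a c z} =
      ENNReal.ofReal ((c ^ d * volume.real (closedBall (0 : E d) 1)) ^ 2 /
        ((2*β-1)*(d:ℝ)+1) * l ^ (-(((2*β-1)*(d:ℝ)+1)/a))) := by
  set ω := volume.real (closedBall (0 : E d) 1)
  set p := (2*β-1)*(d:ℝ)
  have hp : 0 ≤ p := mul_nonneg (by linarith) d.cast_nonneg
  have hball : ∀ r : ℝ, 0 ≤ r → volume (closedBall (0 : E d) r) = ENNReal.ofReal (r ^ d * ω) := by
    intro r hr
    rw [Measure.addHaar_closedBall' _ _ hr, finrank_euclideanSpace_fin,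
      ← ofReal_measureReal measure_closedBall_lt_top.ne, ← ENNReal.ofReal_mul (by positivity)]
  have hfiber : ∀ s ∈ Ioo (-l ^ (-a⁻¹)) 0,
      volume (closedBall (0 : E d) (c * (-s) ^ β)) *
        volume (closedBall (0 : E d) (c * (-s) ^ (β - 1))) =
      ENNReal.ofReal ((c ^ d * ω) ^ 2) * ENNReal.ofReal ((-s) ^ p) := by
    intro s hs
    have ht : 0 < -s := by linarith [hs.2]
    rw [hball _ (by positivity), hball _ (by positivity), ← ENNReal.ofReal_mul (by positivity),
      ← ENNReal.ofReal_mul (by positivity)]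
    congr 1
    rw [show p = β * d + (β - 1) * d by ring, rpow_add ht, rpow_mul ht.le, rpow_mul ht.le]
    simp only [rpow_natCast]
    ring
  rw [setOf_lt_Hfun ha hl]
  refine (volume_setOf_fst_mem_norm_le_norm_le measurableSet_Ioo
    (r₁ := fun s => c * (-s) ^ β) (r₂ := fun s => c * (-s) ^ (β - 1))
    (by fun_prop) (by fun_prop)).trans ?_
  rw [setLIntegral_congr_fun measurableSet_Ioo hfiber,
    lintegral_const_mul _ (by fun_prop), lintegral_Ioo_neg_rpow (by linarith) (by positivity),
    ← ENNReal.ofReal_mul (by positivity), ← rpow_mul hl.le]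
  congr 1
  field_simp

theorem Hfun_weak_Lp_general (d : ℕ) (β a c : ℝ)
    (hβ : 1/2 < β) (ha : 0 < a) (hc : 0 < c) :
    (∃ C' : ℝ, 0 < C' ∧ ∀ l : ℝ, 0 < l →
      volume {z : Z d | l < Hfun d β a c z} =
        ENNReal.ofReal (C' * l ^ (-(((2*β-1)*(d:ℝ)+1)/a)))) ∧
    (⨆ (l : ℝ) (_ : 0 < l),
        ENNReal.ofReal l *
          (volume {z : Z d | l < Hfun d β a c z}) ^ (a/((2*β-1)*(d:ℝ)+1))) < ⊤ := by
  have hQ : 0 < (2*β-1)*(d:ℝ)+1 := by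
    have : 0 ≤ (2*β-1)*(d:ℝ) := mul_nonneg (by linarith) d.cast_nonneg
    linarith
  have hω : 0 < volume.real (closedBall (0 : E d) 1) :=
    ENNReal.toReal_pos (measure_closedBall_pos _ _ one_pos).ne' measure_closedBall_lt_top.ne
  have hC' : 0 < (c ^ d * volume.real (closedBall (0 : E d) 1)) ^ 2 / ((2*β-1)*(d:ℝ)+1) := by
    positivity
  have hvol := fun l (hl : 0 < l) => volume_setOf_lt_Hfun (d := d) (c := c) hβ ha hc hl
  refine ⟨⟨_, hC', hvol⟩, ?_⟩
  rw [← inv_div, iSup_ofReal_mul_rpow_inv_of_eq_mul_rpow_neg hC' (by positivity) hvol]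
  exact ENNReal.ofReal_lt_top

/-- `H` belongs to the weak Lebesgue space `L^{Q/a,∞}`, with an exact formula
for the measure of its superlevel sets. -/
theorem Hfun_weak_Lp (d : ℕ) (hd : 1 ≤ d) (β a c : ℝ)
    (hβ : 1/2 < β) (ha : 0 < a) (hc : 0 < c) :
    (∃ C' : ℝ, 0 < C' ∧ ∀ l : ℝ, 0 < l →
      volume {z : Z d | l < Hfun d β a c z} =
        ENNReal.ofReal (C' * l ^ (-(((2*β-1)*(d:ℝ)+1)/a)))) ∧
    (⨆ (l : ℝ) (_ : 0 < l),
        ENNReal.ofReal l *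
          (volume {z : Z d | l < Hfun d β a c z}) ^ (a/((2*β-1)*(d:ℝ)+1))) < ⊤ :=
  Hfun_weak_Lp_general d β a c hβ ha hc
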